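/- Let (L, W) be a reflection lattice equipped with a compatible family of strict markings: for each reflection σ ∈ W a strict marking (b_σ, β_σ), such that for every w ∈ W and every reflection σ ∈ W one has (w(b_σ), β_σ ∘ w⁻¹) = ±(b_{wσw⁻¹}, β_{wσw⁻¹}). Set R = {b_σ : σ a reflection in W} ∪ {−b_σ : σ a reflection in W}. Then there is a well-defined function assigning to each r ∈ R a homomorphism n_r : L → ℤ such that n_{b_σ} = β_σ and n_{−b_σ} = −β_σ for every reflection σ ∈ W, and (R, {n_r}) is a root system in L, i.e. it satisfies axioms (R1)–(R4). -/

import Mathlib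

open scoped TensorProduct

/-- A reflection on a lattice: an automorphism of order dividing 2 whose
`(−1)`-eigenlattice has rank 1. -/
def IsReflectionE {L : Type*} [AddCommGroup L] (σ : L ≃ₗ[ℤ] L) : Prop :=
  σ * σ = 1 ∧
    Module.finrank ℤ
      (LinearMap.ker ((LinearMap.id : L →ₗ[ℤ] L) + (σ : L →ₗ[ℤ] L))) = 1

/-- A root system in a lattice `L`: a finite set `R` of roots together with coroots
`n r : L →ₗ[ℤ] ℤ` satisfying (R1): `R` and `⋂_{r∈R} ker (n r)` span `ℚ ⊗ L`;
(R2): `n r r = −2`; (R3): reducedness; (R4): closure under the reflections. -/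
def IsRootSystem {L : Type*} [AddCommGroup L] (R : Set L) (n : L → (L →ₗ[ℤ] ℤ)) : Prop :=
  R.Finite ∧
  Submodule.span ℚ
      (⇑(TensorProduct.mk ℤ ℚ L 1) '' (R ∪ {y : L | ∀ r ∈ R, n r y = 0})) = ⊤ ∧
  (∀ r ∈ R, n r r = -2) ∧
  (∀ r ∈ R, ∀ k : ℤ, k • r ∈ R → k = 1 ∨ k = -1) ∧
  (∀ r ∈ R, ∀ t ∈ R, t + n r t • r ∈ R)

/-!
A reflection in the finite group `W` is determined by the line of its root: if `σ, τ ∈ W` are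
reflections marked by `b` and `k • b`, then `σ * τ` is the transvection `x ↦ x + γ x • b` with
`γ b = 0`, and a transvection of finite order on a torsion-free group is trivial, so `σ = τ`.
Hence `n r` can be taken to be the coroot of the reflection marked by `r`, and `R` is reduced;
(R4) holds because that reflection permutes `R` by compatibility. For (R1), averaging over `W`
writes `|W| • x` as a `W`-fixed vector, which lies in every `ker (n r)`, plus a sum of vectors
`x - w x`, which lie in `span ℤ R` because `W` is generated by reflections and `x - σ x ∈ ℤ b σ`.
-/

open Submodule

section Transvection

variable {R V : Type*} [Ring R] [AddCommGroup V] [Module R V]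

theorem LinearEquiv.transvection_pow {f : Module.Dual R V} {v : V} (h : f v = 0) (m : ℕ) :
    transvection h ^ m =
      transvection (f := m • f) (by rw [LinearMap.smul_apply, h, smul_zero]) := by
  induction m with
  | zero => ext x; simp
  | succ m ih =>
    ext x
    rw [pow_succ, mul_apply, ih]
    simp only [transvection.apply, map_add, map_smul, h, LinearMap.smul_apply]
    simp [add_smul, add_assoc]

theorem LinearEquiv.transvection_eq_one_of_isOfFinOrder [IsAddTorsionFree V]
    {f : Module.Dual R V} {v : V} (h : f v = 0) (hfin : IsOfFinOrder (transvection h)) :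
    transvection h = 1 := by
  obtain ⟨m, hm, hpow⟩ := isOfFinOrder_iff_pow_eq_one.mp hfin
  ext x
  have hx := DFunLike.congr_fun hpow x
  rw [transvection_pow, transvection.apply, LinearMap.smul_apply, smul_assoc, coe_one, id_eq,
    add_eq_left, smul_eq_zero] at hx
  rw [transvection.apply, hx.resolve_left hm.ne', add_zero, coe_one, id_eq]

end Transvection

theorem Subgroup.isOfFinOrder_of_mem {G : Type*} [Group G] {H : Subgroup G} [Finite H] {x : G}
    (hx : x ∈ H) : IsOfFinOrder x :=
  Submonoid.isOfFinOrder_coe.mpr (isOfFinOrder_of_finite (⟨x, hx⟩ : H))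

theorem sub_apply_mem_of_mem_closure {R M : Type*} [Ring R] [AddCommGroup M] [Module R M]
    {S : Set (M ≃ₗ[R] M)} {N : Submodule R M} (hS : ∀ σ ∈ S, ∀ x, x - σ x ∈ N)
    {u : M ≃ₗ[R] M} (hu : u ∈ Subgroup.closure S) (x : M) : x - u x ∈ N := by
  induction hu using Subgroup.closure_induction generalizing x with
  | mem σ hσ => exact hS σ hσ x
  | one => simp
  | mul u v _ _ hu hv =>
    rw [LinearEquiv.mul_apply, ← sub_add_sub_cancel x (v x)]
    exact add_mem (hv x) (hu (v x))
  | inv u _ hu =>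
    simpa only [neg_sub, ← LinearEquiv.mul_apply, mul_inv_cancel, LinearEquiv.coe_one, id_eq]
      using neg_mem (hu (u⁻¹ x))

theorem apply_sum_eq_of_mem {R M : Type*} [Ring R] [AddCommGroup M] [Module R M]
    {W : Subgroup (M ≃ₗ[R] M)} [Fintype W] {u : M ≃ₗ[R] M} (hu : u ∈ W) (x : M) :
    u (∑ w : W, (w : M ≃ₗ[R] M) x) = ∑ w : W, (w : M ≃ₗ[R] M) x := by
  rw [map_sum]
  exact Fintype.sum_equiv (Equiv.mulLeft ⟨u, hu⟩) _ _ fun w => rfl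

section Lattice

variable {L : Type*} [AddCommGroup L]

theorem span_mk_eq_top_of_forall_smul_mem (K : Type*) [Field K] [CharZero K] {s : Set L}
    (h : ∀ x, ∃ c : ℤ, c ≠ 0 ∧ c • x ∈ span ℤ s) :
    span K (TensorProduct.mk ℤ K L 1 '' s) = ⊤ := by
  rw [← baseChange_span, eq_top_iff, ← baseChange_top, baseChange_eq_span, span_le]
  rintro _ ⟨x, -, rfl⟩
  obtain ⟨c, hc, hcx⟩ := h x
  have : (c : K) • (1 : K) ⊗ₜ[ℤ] x ∈ (span ℤ s).baseChange K := by
    rw [Int.cast_smul_eq_zsmul, ← TensorProduct.tmul_smul]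
    exact tmul_mem_baseChange_of_mem _ hcx
  exact (smul_mem_iff _ (Int.cast_ne_zero.mpr hc)).mp this

theorem span_mk_union_fixedPoints_eq_top (K : Type*) [Field K] [CharZero K]
    {W : Subgroup (L ≃ₗ[ℤ] L)} [Finite W] {s : Set L}
    (hs : ∀ w ∈ W, ∀ x, x - w x ∈ span ℤ s) :
    span K (TensorProduct.mk ℤ K L 1 '' (s ∪ {y | ∀ w ∈ W, w y = y})) = ⊤ := by
  have := Fintype.ofFinite W
  refine span_mk_eq_top_of_forall_smul_mem K fun x => ⟨Fintype.card W, by simp, ?_⟩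
  have hsplit : (Fintype.card W : ℤ) • x =
      ∑ w : W, (x - (w : L ≃ₗ[ℤ] L) x) + ∑ w : W, (w : L ≃ₗ[ℤ] L) x := by
    rw [Finset.sum_sub_distrib, sub_add_cancel, Finset.sum_const, Finset.card_univ, natCast_zsmul]
  rw [hsplit]
  refine add_mem (sum_mem fun w _ => span_mono Set.subset_union_left (hs w w.2 x)) ?_
  exact subset_span (Or.inr fun u hu => apply_sum_eq_of_mem hu x)

theorem IsReflectionE.ne_one [IsAddTorsionFree L] {σ : L ≃ₗ[ℤ] L} (hσ : IsReflectionE σ) :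
    σ ≠ 1 := by
  rintro rfl
  have hker : LinearMap.ker (LinearMap.id + ((1 : L ≃ₗ[ℤ] L) : L →ₗ[ℤ] L)) = ⊥ :=
    LinearMap.ker_eq_bot'.2 fun x hx => by simpa [← two_nsmul] using hx
  have := hσ.2
  rw [hker, finrank_bot] at this
  exact zero_ne_one this

theorem IsReflectionE.conj {σ : L ≃ₗ[ℤ] L} (hσ : IsReflectionE σ) (w : L ≃ₗ[ℤ] L) :
    IsReflectionE (w * σ * w⁻¹) := by
  refine ⟨by rw [show w * σ * w⁻¹ * (w * σ * w⁻¹) = w * (σ * σ) * w⁻¹ by group, hσ.1]; group, ?_⟩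
  have hker : LinearMap.ker (LinearMap.id + ((w * σ * w⁻¹ : L ≃ₗ[ℤ] L) : L →ₗ[ℤ] L)) =
      (LinearMap.ker (LinearMap.id + (σ : L →ₗ[ℤ] L))).map (w : L →ₗ[ℤ] L) := by
    ext x
    rw [mem_map_equiv, LinearMap.mem_ker, LinearMap.mem_ker]
    simp only [LinearMap.add_apply, LinearMap.id_apply, LinearEquiv.coe_coe,
      LinearEquiv.mul_apply]
    rw [← w.map_eq_zero_iff (x := w.symm x + _), map_add, w.apply_symm_apply]
    rfl
  rw [hker, LinearEquiv.finrank_map_eq, hσ.2]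

def IsStrictMarking (σ : L ≃ₗ[ℤ] L) (b : L) (β : L →ₗ[ℤ] ℤ) : Prop :=
  ∀ x, σ x = x + β x • b

namespace IsStrictMarking

variable {σ : L ≃ₗ[ℤ] L} {b : L} {β : L →ₗ[ℤ] ℤ}

theorem neg (h : IsStrictMarking σ b β) : IsStrictMarking σ (-b) (-β) := fun x => by
  rw [h x, LinearMap.neg_apply, neg_smul_neg]

theorem sub_apply_mem_span (h : IsStrictMarking σ b β) {s : Set L} (hb : b ∈ s) (x : L) :
    x - σ x ∈ span ℤ s := by
  rw [h x, sub_add_cancel_left]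
  exact neg_mem (smul_mem _ _ (subset_span hb))

variable [IsAddTorsionFree L]

theorem coroot_eq {β' : L →ₗ[ℤ] ℤ} (h : IsStrictMarking σ b β) (h' : IsStrictMarking σ b β')
    (hb : b ≠ 0) : β = β' :=
  LinearMap.ext fun x => smul_left_injective ℤ hb (add_left_cancel ((h x).symm.trans (h' x)))

theorem coroot_apply_eq_zero (h : IsStrictMarking σ b β) (hb : b ≠ 0) {y : L} (hy : σ y = y) :
    β y = 0 :=
  (smul_eq_zero.mp (add_eq_left.mp ((h y).symm.trans hy))).resolve_right hb

theorem root_ne_zero (h : IsStrictMarking σ b β) (hσ : IsReflectionE σ) : b ≠ 0 := by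
  rintro rfl
  exact hσ.ne_one (LinearEquiv.ext fun x => by simp [h x])

theorem coroot_apply_root (h : IsStrictMarking σ b β) (hσ : IsReflectionE σ) : β b = -2 := by
  have hb := h.root_ne_zero hσ
  have hσσ (x : L) : (β x * (2 + β b)) • b = 0 := by
    have := DFunLike.congr_fun hσ.1 x
    rw [LinearEquiv.mul_apply, h x, map_add, map_smul, h x, h b, LinearEquiv.coe_one, id,
      ← sub_eq_zero] at this
    rw [← this]; module
  by_contra hne
  refine hσ.ne_one (LinearEquiv.ext fun x => ?_)
  have : β x = 0 := by
    simpa [hb, show 2 + β b ≠ 0 by omega] using hσσ x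
  simp [h x, this]

theorem apply_root (h : IsStrictMarking σ b β) (hσ : IsReflectionE σ) : σ b = -b := by
  rw [h b, h.coroot_apply_root hσ]; module

end IsStrictMarking

theorem IsReflectionE.eq_of_isStrictMarking_smul [IsAddTorsionFree L] {σ τ : L ≃ₗ[ℤ] L}
    (hσ : IsReflectionE σ) (hτ : IsReflectionE τ) (hστ : IsOfFinOrder (σ * τ)) {b : L}
    {β β' : L →ₗ[ℤ] ℤ} {k : ℤ} (hmσ : IsStrictMarking σ b β)
    (hmτ : IsStrictMarking τ (k • b) β') : σ = τ := by
  have hγ : (β - k • β') b = 0 := by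
    have := hmτ.coroot_apply_root hτ
    rw [map_smul, smul_eq_mul] at this
    rw [LinearMap.sub_apply, LinearMap.smul_apply, smul_eq_mul, hmσ.coroot_apply_root hσ, this,
      sub_self]
  have hshear : σ * τ = LinearEquiv.transvection hγ := by
    ext x
    rw [LinearEquiv.mul_apply, hmτ x, map_add, map_smul, map_smul, hmσ.apply_root hσ, hmσ x,
      LinearEquiv.transvection.apply, LinearMap.sub_apply, LinearMap.smul_apply]
    module
  rw [hshear] at hστ
  have h1 : σ * τ = 1 := hshear.trans (LinearEquiv.transvection_eq_one_of_isOfFinOrder hγ hστ)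
  exact ((eq_inv_of_mul_eq_one_right h1).trans (inv_eq_of_mul_eq_one_right hσ.1)).symm

theorem IsStrictMarking.coroot_eq_of_isOfFinOrder_mul [IsAddTorsionFree L] {σ τ : L ≃ₗ[ℤ] L}
    (hσ : IsReflectionE σ) (hτ : IsReflectionE τ) (hστ : IsOfFinOrder (σ * τ)) {b : L}
    {β β' : L →ₗ[ℤ] ℤ} (hmσ : IsStrictMarking σ b β) (hmτ : IsStrictMarking τ b β') : β = β' := by
  obtain rfl := hσ.eq_of_isStrictMarking_smul hτ hστ (k := 1) hmσ (by rwa [one_smul])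
  exact hmσ.coroot_eq hmτ (hmσ.root_ne_zero hσ)

end Lattice

section MarkedRoots

variable {L : Type*} [AddCommGroup L] {W : Subgroup (L ≃ₗ[ℤ] L)} {b : (L ≃ₗ[ℤ] L) → L}
  {β : (L ≃ₗ[ℤ] L) → (L →ₗ[ℤ] ℤ)}

def markedRoots (W : Subgroup (L ≃ₗ[ℤ] L)) (b : (L ≃ₗ[ℤ] L) → L) : Set L :=
  {r | ∃ σ ∈ W, IsReflectionE σ ∧ (r = b σ ∨ r = -b σ)}

theorem markedRoots_finite (hW : (W : Set (L ≃ₗ[ℤ] L)).Finite) : (markedRoots W b).Finite :=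
  ((hW.image b).union (hW.image (-b))).subset <| by
    rintro r ⟨σ, hσW, -, rfl | rfl⟩
    exacts [Or.inl ⟨σ, hσW, rfl⟩, Or.inr ⟨σ, hσW, rfl⟩]

theorem apply_mem_markedRoots
    (hcompat : ∀ w ∈ W, ∀ σ ∈ W, IsReflectionE σ →
      w (b σ) = b (w * σ * w⁻¹) ∨ w (b σ) = -b (w * σ * w⁻¹))
    {w : L ≃ₗ[ℤ] L} (hw : w ∈ W) {r : L} (hr : r ∈ markedRoots W b) : w r ∈ markedRoots W b := by
  obtain ⟨σ, hσW, hσ, rfl | rfl⟩ := hr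
  all_goals
    refine ⟨w * σ * w⁻¹, mul_mem (mul_mem hw hσW) (inv_mem hw), hσ.conj w, ?_⟩
    rcases hcompat w hw σ hσW hσ with h | h <;> simp [h]

theorem exists_isStrictMarking_of_mem_markedRoots
    (hmark : ∀ σ ∈ W, IsReflectionE σ → IsStrictMarking σ (b σ) (β σ))
    {r : L} (hr : r ∈ markedRoots W b) :
    ∃ n : L →ₗ[ℤ] ℤ, ∃ σ ∈ W, IsReflectionE σ ∧ IsStrictMarking σ r n := by
  obtain ⟨σ, hσW, hσ, rfl | rfl⟩ := hr
  exacts [⟨β σ, σ, hσW, hσ, hmark σ hσW hσ⟩, ⟨-β σ, σ, hσW, hσ, (hmark σ hσW hσ).neg⟩]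

variable [IsAddTorsionFree L] [Finite W]

theorem eq_one_or_eq_neg_one_of_smul_mem_markedRoots
    (hmark : ∀ σ ∈ W, IsReflectionE σ → IsStrictMarking σ (b σ) (β σ))
    {r : L} (hr : r ∈ markedRoots W b) {k : ℤ} (hk : k • r ∈ markedRoots W b) :
    k = 1 ∨ k = -1 := by
  obtain ⟨σ, hσW, hσ, hr⟩ := hr
  obtain ⟨τ, hτW, hτ, hkr⟩ := hk
  have hb := (hmark σ hσW hσ).root_ne_zero hσ
  have key (j : ℤ) (hj : b τ = j • b σ) : j = 1 := by
    obtain rfl := hσ.eq_of_isStrictMarking_smul hτ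
      (Subgroup.isOfFinOrder_of_mem (mul_mem hσW hτW)) (hmark σ hσW hσ) (hj ▸ hmark τ hτW hτ)
    exact smul_left_injective ℤ hb (hj.symm.trans (one_smul ℤ _).symm)
  rcases hr with rfl | rfl <;> rcases hkr with h | h
  · exact Or.inl (key k h.symm)
  · exact Or.inr (by linarith [key (-k) (by rw [neg_smul, h, neg_neg])])
  · exact Or.inr (by linarith [key (-k) (by rw [neg_smul, ← h, smul_neg])])
  · exact Or.inl (key k (by rw [← neg_inj, ← h, smul_neg]))

variable {n : L → (L →ₗ[ℤ] ℤ)}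

theorem coroot_eq_of_isStrictMarking (hn : ∀ r ∈ markedRoots W b,
      ∃ σ ∈ W, IsReflectionE σ ∧ IsStrictMarking σ r (n r))
    {σ : L ≃ₗ[ℤ] L} (hσW : σ ∈ W) (hσ : IsReflectionE σ) {r : L} (hr : r ∈ markedRoots W b)
    {β' : L →ₗ[ℤ] ℤ} (hm : IsStrictMarking σ r β') : n r = β' := by
  obtain ⟨τ, hτW, hτ, hmτ⟩ := hn r hr
  exact (hm.coroot_eq_of_isOfFinOrder_mul hσ hτ
    (Subgroup.isOfFinOrder_of_mem (mul_mem hσW hτW)) hmτ).symm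

theorem span_mk_markedRoots_union_eq_top
    (hgen : Subgroup.closure {σ : L ≃ₗ[ℤ] L | σ ∈ W ∧ IsReflectionE σ} = W)
    (hmark : ∀ σ ∈ W, IsReflectionE σ → IsStrictMarking σ (b σ) (β σ))
    (hn : ∀ r ∈ markedRoots W b, ∃ σ ∈ W, IsReflectionE σ ∧ IsStrictMarking σ r (n r)) :
    span ℚ (TensorProduct.mk ℤ ℚ L 1 ''
      (markedRoots W b ∪ {y | ∀ r ∈ markedRoots W b, n r y = 0})) = ⊤ := by
  have hspan : ∀ w ∈ W, ∀ x, x - w x ∈ span ℤ (markedRoots W b) := fun w hw => by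
    rw [← hgen] at hw
    exact sub_apply_mem_of_mem_closure (fun σ hσ =>
      (hmark σ hσ.1 hσ.2).sub_apply_mem_span (s := markedRoots W b) ⟨σ, hσ.1, hσ.2, Or.inl rfl⟩)
      hw
  refine eq_top_mono (span_mono (Set.image_mono (Set.union_subset_union_right _ ?_)))
    (span_mk_union_fixedPoints_eq_top ℚ hspan)
  intro y hy r hr
  obtain ⟨τ, hτW, hτ, hmτ⟩ := hn r hr
  exact hmτ.coroot_apply_eq_zero (hmτ.root_ne_zero hτ) (hy τ hτW)

end MarkedRoots

theorem stmt4_general (L : Type*) [AddCommGroup L] [Module.Free ℤ L]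
    (W : Subgroup (L ≃ₗ[ℤ] L)) (hWfin : (W : Set (L ≃ₗ[ℤ] L)).Finite)
    (hgen : Subgroup.closure {σ : L ≃ₗ[ℤ] L | σ ∈ W ∧ IsReflectionE σ} = W)
    (b : (L ≃ₗ[ℤ] L) → L) (β : (L ≃ₗ[ℤ] L) → (L →ₗ[ℤ] ℤ))
    (hmark : ∀ σ ∈ W, IsReflectionE σ → ∀ x : L, σ x = x + β σ x • b σ)
    (hcompat : ∀ w ∈ W, ∀ σ ∈ W, IsReflectionE σ →
      (w (b σ) = b (w * σ * w⁻¹) ∧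
        (β σ) ∘ₗ ((w⁻¹ : L ≃ₗ[ℤ] L) : L →ₗ[ℤ] L) = β (w * σ * w⁻¹)) ∨
      (w (b σ) = -b (w * σ * w⁻¹) ∧
        (β σ) ∘ₗ ((w⁻¹ : L ≃ₗ[ℤ] L) : L →ₗ[ℤ] L) = -β (w * σ * w⁻¹))) :
    ∃ n : L → (L →ₗ[ℤ] ℤ),
      (∀ σ ∈ W, IsReflectionE σ → n (b σ) = β σ ∧ n (-b σ) = -β σ) ∧
      IsRootSystem {r : L | ∃ σ ∈ W, IsReflectionE σ ∧ (r = b σ ∨ r = -b σ)} n := by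
  have : IsAddTorsionFree L := Module.isTorsionFree_int_iff_isAddTorsionFree.mp inferInstance
  have : Finite W := hWfin.to_subtype
  replace hmark : ∀ σ ∈ W, IsReflectionE σ → IsStrictMarking σ (b σ) (β σ) := hmark
  have hstable {w} (hw : w ∈ W) {r} (hr : r ∈ markedRoots W b) : w r ∈ markedRoots W b :=
    apply_mem_markedRoots (fun w hw σ hσW hσ => (hcompat w hw σ hσW hσ).imp And.left And.left)
      hw hr
  choose! n hn using fun r (hr : r ∈ markedRoots W b) =>
    exists_isStrictMarking_of_mem_markedRoots hmark hr
  refine ⟨n, fun σ hσW hσ => ⟨?_, ?_⟩, markedRoots_finite hWfin,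
    span_mk_markedRoots_union_eq_top hgen hmark hn, ?_,
    fun r hr k => eq_one_or_eq_neg_one_of_smul_mem_markedRoots hmark hr, ?_⟩
  · exact coroot_eq_of_isStrictMarking hn hσW hσ ⟨σ, hσW, hσ, Or.inl rfl⟩ (hmark σ hσW hσ)
  · exact coroot_eq_of_isStrictMarking hn hσW hσ ⟨σ, hσW, hσ, Or.inr rfl⟩ (hmark σ hσW hσ).neg
  · intro r hr
    obtain ⟨σ, -, hσ, hm⟩ := hn r hr
    exact hm.coroot_apply_root hσ
  · intro r hr t ht
    obtain ⟨σ, hσW, -, hm⟩ := hn r hr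
    rw [← hm t]
    exact hstable hσW ht

/-- a reflection lattice with a compatible family of strict markings
`(b σ, β σ)` determines a root system with roots `{± b σ}` and coroots
`n (b σ) = β σ`, `n (−b σ) = −β σ`. -/
theorem stmt4 (L : Type*) [AddCommGroup L] [Module.Free ℤ L] [Module.Finite ℤ L]
    (W : Subgroup (L ≃ₗ[ℤ] L)) (hWfin : (W : Set (L ≃ₗ[ℤ] L)).Finite)
    (hgen : Subgroup.closure {σ : L ≃ₗ[ℤ] L | σ ∈ W ∧ IsReflectionE σ} = W)
    (b : (L ≃ₗ[ℤ] L) → L) (β : (L ≃ₗ[ℤ] L) → (L →ₗ[ℤ] ℤ))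
    (hmark : ∀ σ ∈ W, IsReflectionE σ → ∀ x : L, σ x = x + β σ x • b σ)
    (hcompat : ∀ w ∈ W, ∀ σ ∈ W, IsReflectionE σ →
      (w (b σ) = b (w * σ * w⁻¹) ∧
        (β σ) ∘ₗ ((w⁻¹ : L ≃ₗ[ℤ] L) : L →ₗ[ℤ] L) = β (w * σ * w⁻¹)) ∨
      (w (b σ) = -b (w * σ * w⁻¹) ∧
        (β σ) ∘ₗ ((w⁻¹ : L ≃ₗ[ℤ] L) : L →ₗ[ℤ] L) = -β (w * σ * w⁻¹))) :
    ∃ n : L → (L →ₗ[ℤ] ℤ),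
      (∀ σ ∈ W, IsReflectionE σ → n (b σ) = β σ ∧ n (-b σ) = -β σ) ∧
      IsRootSystem {r : L | ∃ σ ∈ W, IsReflectionE σ ∧ (r = b σ ∨ r = -b σ)} n :=
  stmt4_general L W hWfin hgen b β hmark hcompat
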